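/- arXiv:2604.25242 — 2 statements merged into one kernel-verified Lean document; each statement's English description precedes it below -/
import Mathlib

section
/- Let Π = V_m (so λ = m+1) and let T: V_m → ℂ_ν be a weight-ν covector (i.e., T(Hu) = ν T(u) for all u). Then for ε, δ ∈ {+1, -1} and every u ∈ V_m, (T ⊗ pr_ε) ∘ pr_{λ→λ+δ}(u ⊗ f_ε) = ((λ + δ(1 + εν))/(2λ)) · (Tu) ⊗ f_ε, where pr_ε: ℂ² → ℂ f_ε is the coordinate projection and pr_{λ→λ+δ} is the projection of V_m ⊗ ℂ² onto its Casimir eigenspace with eigenvalue (λ+δ)² - 1. -/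
open scoped TensorProduct

noncomputable section

/-- A (not necessarily bracket-compatible) action of the generators `H, X, Y`
of `sl(2,ℂ)` on a complex vector space. -/
structure SL2Rep (V : Type*) [AddCommGroup V] [Module ℂ V] where
  H : Module.End ℂ V
  X : Module.End ℂ V
  Y : Module.End ℂ V

namespace SL2Rep

variable {V W : Type*} [AddCommGroup V] [Module ℂ V] [AddCommGroup W] [Module ℂ W]

/-- The defining relations of an `sl₂`-triple. -/
def IsSl2Rep (ρ : SL2Rep V) : Prop :=
  ρ.H ∘ₗ ρ.X - ρ.X ∘ₗ ρ.H = (2:ℂ) • ρ.X ∧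
  ρ.H ∘ₗ ρ.Y - ρ.Y ∘ₗ ρ.H = (-2:ℂ) • ρ.Y ∧
  ρ.X ∘ₗ ρ.Y - ρ.Y ∘ₗ ρ.X = ρ.H

/-- The Casimir operator `Ω = H² + 2(XY + YX)`. -/
def casimir (ρ : SL2Rep V) : Module.End ℂ V :=
  ρ.H ∘ₗ ρ.H + (2:ℂ) • (ρ.X ∘ₗ ρ.Y + ρ.Y ∘ₗ ρ.X)

/-- The diagonal (coproduct) action on a tensor product. -/
def tensor (ρ : SL2Rep V) (σ : SL2Rep W) : SL2Rep (V ⊗[ℂ] W) where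
  H := TensorProduct.map ρ.H LinearMap.id + TensorProduct.map LinearMap.id σ.H
  X := TensorProduct.map ρ.X LinearMap.id + TensorProduct.map LinearMap.id σ.X
  Y := TensorProduct.map ρ.Y LinearMap.id + TensorProduct.map LinearMap.id σ.Y

end SL2Rep

/-- Matrix of `H` on the standard basis of the irreducible `(m+1)`-dimensional module. -/
def Hmat (m : ℕ) : Matrix (Fin (m+1)) (Fin (m+1)) ℂ :=
  Matrix.of fun i j => if i = j then ((m:ℂ) - 2 * ((i:ℕ):ℂ)) else 0

/-- Matrix of `X` (raising operator): `X e_j = j (m+1-j) e_(j-1)`. -/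
def Xmat (m : ℕ) : Matrix (Fin (m+1)) (Fin (m+1)) ℂ :=
  Matrix.of fun i j => if (j:ℕ) = (i:ℕ) + 1 then ((j:ℕ):ℂ) * ((m:ℂ) + 1 - ((j:ℕ):ℂ)) else 0

/-- Matrix of `Y` (lowering operator): `Y e_j = e_(j+1)`. -/
def Ymat (m : ℕ) : Matrix (Fin (m+1)) (Fin (m+1)) ℂ :=
  Matrix.of fun i j => if (i:ℕ) = (j:ℕ) + 1 then 1 else 0

/-- The irreducible `(m+1)`-dimensional representation `V_m` of `sl(2,ℂ)`. -/
def stdRep (m : ℕ) : SL2Rep (Fin (m+1) → ℂ) :=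
  ⟨Matrix.toLin' (Hmat m), Matrix.toLin' (Xmat m), Matrix.toLin' (Ymat m)⟩

/-- The basis vector `f_ε` of `ℂ²`: `f₊` for `ε = 1`, `f₋` for `ε = -1`. -/
def fvec (i : Fin (1+1)) : Fin (1+1) → ℂ := Pi.single i 1

/-- The coordinate projection of `ℂ²` onto the line `ℂ f_i`. -/
def prLine (i : Fin (1+1)) : Module.End ℂ (Fin (1+1) → ℂ) :=
  LinearMap.single ℂ (fun _ : Fin (1+1) => ℂ) i ∘ₗ LinearMap.proj i

/-!
Write `λ = m + 1`, `w = u ⊗ f_ε` and `Ω` for the Casimir of `V_m ⊗ ℂ²`. Since `P` and `1 - P`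
project onto the `Ω`-eigenspaces for `(λ ± δ)² - 1`, we get `4λδ · P w = Ω w - ((λ - δ)² - 1) w`.
Now `Ω = Ω_{V_m} ⊗ 1 + 1 ⊗ Ω_{ℂ²} + 2 H ⊗ H + 4 (X ⊗ Y + Y ⊗ X)`; after applying `T ⊗ pr_ε` the
last two summands die because `X` and `Y` move `f_ε` off the line `ℂ f_ε`, `2 H ⊗ H` contributes
`2εν`, and the Casimirs are the scalars `λ² - 1` and `3`.
-/

open TensorProduct

theorem Fin.sum_ite_val_eq {M : Type*} [AddCommMonoid M] {n : ℕ} (a : ℕ) (f : Fin n → M) :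
    ∑ k : Fin n, (if (k:ℕ) = a then f k else 0) = if h : a < n then f ⟨a, h⟩ else 0 := by
  split_ifs with h
  · simp_rw [← Fin.ext_iff (b := ⟨a, h⟩)]
    exact Fintype.sum_ite_eq' _ f
  · exact Finset.sum_eq_zero fun k _ => if_neg (by omega)

theorem Fin.sum_ite_eq_val {M : Type*} [AddCommMonoid M] {n : ℕ} (a : ℕ) (f : Fin n → M) :
    ∑ k : Fin n, (if a = (k:ℕ) then f k else 0) = if h : a < n then f ⟨a, h⟩ else 0 := by
  simp_rw [eq_comm (a := a), Fin.sum_ite_val_eq]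

theorem Module.End.sub_smul_apply_eq_of_comp_eq_smul {R M : Type*} [CommRing R]
    [AddCommGroup M] [Module R M] {Ω P : Module.End R M} {a b : R}
    (hP : Ω ∘ₗ P = a • P) (hQ : Ω ∘ₗ (1 - P) = b • (1 - P)) (v : M) :
    (a - b) • P v = Ω v - b • v := by
  have h₁ := LinearMap.congr_fun hP v
  have h₂ := LinearMap.congr_fun hQ v
  simp only [LinearMap.comp_apply, LinearMap.smul_apply, LinearMap.sub_apply,
    Module.End.one_apply, map_sub] at h₁ h₂
  linear_combination (norm := module) -(h₁ + h₂)

namespace SL2Rep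

variable {V W : Type*} [AddCommGroup V] [Module ℂ V] [AddCommGroup W] [Module ℂ W]

theorem casimir_tensor (ρ : SL2Rep V) (σ : SL2Rep W) :
    (ρ.tensor σ).casimir = map ρ.casimir LinearMap.id + map LinearMap.id σ.casimir
      + (2:ℂ) • map ρ.H σ.H + (4:ℂ) • (map ρ.X σ.Y + map ρ.Y σ.X) := by
  ext v w
  simp only [casimir, tensor, LinearMap.add_apply, LinearMap.smul_apply, LinearMap.comp_apply,
    AlgebraTensorModule.curry_apply, curry_apply, LinearMap.restrictScalars_self, map_add,
    map_tmul, LinearMap.id_apply, tmul_add, add_tmul, ← smul_tmul', tmul_smul]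
  module

end SL2Rep

section Matrices

open Matrix

variable (m : ℕ)

theorem Hmat_eq_diagonal : Hmat m = diagonal fun i : Fin (m+1) => (m:ℂ) - 2 * (i:ℕ) := by
  ext i j
  simp [Hmat, diagonal]

theorem Xmat_mul_Ymat :
    Xmat m * Ymat m = diagonal fun i : Fin (m+1) => ((i:ℕ) + 1 : ℂ) * (m - (i:ℕ)) := by
  ext i j
  simp only [Xmat, Ymat, diagonal, mul_apply, of_apply, mul_ite, mul_one, mul_zero,
    Fin.sum_ite_val_eq, Nat.add_right_cancel_iff, Fin.val_inj]
  obtain rfl | hij := eq_or_ne i j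
  · simp only [if_true]
    split_ifs with hi
    · push_cast; ring
    · rw [show (i:ℕ) = m by omega]; ring
  · simp [hij, hij.symm]

theorem Ymat_mul_Xmat :
    Ymat m * Xmat m = diagonal fun i : Fin (m+1) => ((i:ℕ) : ℂ) * (m + 1 - (i:ℕ)) := by
  ext ⟨_ | i, hi⟩ j
  · simp [Xmat, Ymat, diagonal, mul_apply]
  · simp only [Xmat, Ymat, diagonal, mul_apply, of_apply, ite_mul, one_mul, zero_mul,
      Nat.add_right_cancel_iff, Fin.sum_ite_eq_val, Fin.ext_iff]
    split_ifs with _ hj <;> first | rfl | omega | rw [hj]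

theorem casimir_mat :
    Hmat m * Hmat m + (2:ℂ) • (Xmat m * Ymat m + Ymat m * Xmat m) = (((m:ℂ)+1)^2 - 1) • 1 := by
  rw [Hmat_eq_diagonal, Xmat_mul_Ymat, Ymat_mul_Xmat, diagonal_mul_diagonal, diagonal_add,
    ← diagonal_smul, diagonal_add, ← diagonal_one, ← diagonal_smul]
  congr 1
  ext i
  simp only [Pi.smul_apply, smul_eq_mul, mul_one]
  ring

end Matrices

theorem casimir_stdRep (m : ℕ) :
    (stdRep m).casimir = (((m:ℂ)+1)^2 - 1) • (1 : Module.End ℂ (Fin (m+1) → ℂ)) := by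
  rw [Module.End.one_eq_id, ← Matrix.toLin'_one, ← map_smul, ← casimir_mat]
  simp only [SL2Rep.casimir, stdRep, map_add, map_smul, Matrix.toLin'_mul]

theorem stdRep_H_single (m : ℕ) (i : Fin (m+1)) :
    (stdRep m).H (Pi.single i 1) = ((m:ℂ) - 2 * (i:ℕ)) • Pi.single i 1 := by
  ext j
  obtain rfl | h := eq_or_ne j i <;> simp [stdRep, Hmat, Matrix.toLin'_apply, *]

theorem stdRep_X_single_apply_self (m : ℕ) (i : Fin (m+1)) :
    (stdRep m).X (Pi.single i 1) i = 0 := by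
  simp [stdRep, Xmat, Matrix.toLin'_apply]

theorem stdRep_Y_single_apply_self (m : ℕ) (i : Fin (m+1)) :
    (stdRep m).Y (Pi.single i 1) i = 0 := by
  simp [stdRep, Ymat, Matrix.toLin'_apply]

theorem prLine_apply (i : Fin (1+1)) (v : Fin (1+1) → ℂ) : prLine i v = Pi.single i (v i) := rfl

theorem prLine_fvec (i : Fin (1+1)) : prLine i (fvec i) = fvec i := by
  simp [prLine_apply, fvec]

theorem map_prLine_casimir_tensor_tmul_fvec {V : Type*} [AddCommGroup V] [Module ℂ V]
    (ρ : SL2Rep V) {c ν : ℂ} (hc : ρ.casimir = c • 1) (T : V →ₗ[ℂ] ℂ)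
    (hT : ∀ v, T (ρ.H v) = ν * T v) (i : Fin (1+1)) (v : V) :
    map T (prLine i) ((ρ.tensor (stdRep 1)).casimir (v ⊗ₜ fvec i))
      = (c + 3 + 2 * (1 - 2 * (i:ℕ)) * ν) • (T v ⊗ₜ fvec i) := by
  have hT' : ∀ v, T (ρ.H v) = ν • T v := hT
  have hH : (stdRep 1).H (fvec i) = (1 - 2 * (i:ℕ) : ℂ) • fvec i := by
    rw [fvec]
    simpa using stdRep_H_single 1 i
  have hX : prLine i ((stdRep 1).X (fvec i)) = 0 := by
    rw [prLine_apply, fvec, stdRep_X_single_apply_self, Pi.single_zero]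
  have hY : prLine i ((stdRep 1).Y (fvec i)) = 0 := by
    rw [prLine_apply, fvec, stdRep_Y_single_apply_self, Pi.single_zero]
  rw [SL2Rep.casimir_tensor, hc, casimir_stdRep]
  simp only [LinearMap.add_apply, LinearMap.smul_apply, map_tmul, Module.End.one_apply,
    LinearMap.id_apply, map_add, map_smul, hT', hH, hX, hY, prLine_fvec, tmul_zero, add_zero,
    tmul_smul, ← smul_tmul']
  norm_num
  module

theorem translation_C2_general (m : ℕ) (ν : ℂ)
    (T : (Fin (m+1) → ℂ) →ₗ[ℂ] ℂ)
    (hT : ∀ u, T ((stdRep m).H u) = ν * T u)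
    (eps delta : ℂ) (hdelta : delta = 1 ∨ delta = -1)
    (ieps : Fin (1+1)) (hieps : (eps = 1 ∧ ieps = 0) ∨ (eps = -1 ∧ ieps = 1))
    (P : Module.End ℂ ((Fin (m+1) → ℂ) ⊗[ℂ] (Fin (1+1) → ℂ)))
    (hPplus : ((stdRep m).tensor (stdRep 1)).casimir ∘ₗ P
        = ((((m:ℂ)+1) + delta)^2 - 1) • P)
    (hPminus : ((stdRep m).tensor (stdRep 1)).casimir ∘ₗ (1 - P)
        = ((((m:ℂ)+1) - delta)^2 - 1) • (1 - P))
    (u : Fin (m+1) → ℂ) :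
    TensorProduct.map T (prLine ieps) (P (u ⊗ₜ[ℂ] fvec ieps))
      = ((((m:ℂ)+1) + delta * (1 + eps * ν)) / (2 * ((m:ℂ)+1)))
          • ((T u) ⊗ₜ[ℂ] fvec ieps) := by
  have heps : eps = 1 - 2 * (ieps : ℕ) := by
    rcases hieps with ⟨rfl, rfl⟩ | ⟨rfl, rfl⟩ <;> norm_num
  have hdelta_ne : delta ≠ 0 := by rcases hdelta with rfl | rfl <;> norm_num
  have hlam : (m:ℂ) + 1 ≠ 0 := Nat.cast_add_one_ne_zero m
  have hgap : (((m:ℂ)+1) + delta)^2 - 1 - ((((m:ℂ)+1) - delta)^2 - 1) ≠ 0 := by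
    intro h
    apply mul_ne_zero (mul_ne_zero (by norm_num : (4:ℂ) ≠ 0) hlam) hdelta_ne
    linear_combination h
  have key := congrArg (map T (prLine ieps))
    (Module.End.sub_smul_apply_eq_of_comp_eq_smul hPplus hPminus (u ⊗ₜ fvec ieps))
  rw [map_smul, map_sub, map_smul, map_tmul, prLine_fvec,
    map_prLine_casimir_tensor_tmul_fvec _ (casimir_stdRep m) T hT, ← sub_smul] at key
  rw [← eq_inv_smul_iff₀ hgap] at key
  rw [key, smul_smul, heps]
  congr 1
  rcases hdelta with rfl | rfl <;> field_simp <;> ring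

/-- **Translation of symmetry breaking via `⊗ ℂ²`** for `Π = V_m`, `λ = m+1`:
`(T ⊗ pr_ε) ∘ pr_{λ→λ+δ}(u ⊗ f_ε) = ((λ + δ(1+εν))/(2λ)) (Tu) ⊗ f_ε`. -/
theorem translation_C2 (m : ℕ) (ν : ℂ)
    (T : (Fin (m+1) → ℂ) →ₗ[ℂ] ℂ)
    (hT : ∀ u, T ((stdRep m).H u) = ν * T u)
    (eps delta : ℂ) (heps : eps = 1 ∨ eps = -1) (hdelta : delta = 1 ∨ delta = -1)
    (ieps : Fin (1+1)) (hieps : (eps = 1 ∧ ieps = 0) ∨ (eps = -1 ∧ ieps = 1))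
    (P : Module.End ℂ ((Fin (m+1) → ℂ) ⊗[ℂ] (Fin (1+1) → ℂ)))
    (hPidem : P ∘ₗ P = P)
    (hPplus : ((stdRep m).tensor (stdRep 1)).casimir ∘ₗ P
        = ((((m:ℂ)+1) + delta)^2 - 1) • P)
    (hPminus : ((stdRep m).tensor (stdRep 1)).casimir ∘ₗ (1 - P)
        = ((((m:ℂ)+1) - delta)^2 - 1) • (1 - P))
    (u : Fin (m+1) → ℂ) :
    TensorProduct.map T (prLine ieps) (P (u ⊗ₜ[ℂ] fvec ieps))
      = ((((m:ℂ)+1) + delta * (1 + eps * ν)) / (2 * ((m:ℂ)+1)))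
          • ((T u) ⊗ₜ[ℂ] fvec ieps) :=
  translation_C2_general m ν T hT eps delta hdelta ieps hieps P hPplus hPminus u
end
end

section
/- Let Π be an sl(2,ℂ)-module with Casimir eigenvalue λ² - 1, and let F = ℂ³ be the adjoint representation realized as sl(2,ℂ) itself. Set Ω̃ := Ω - λ² - 7 acting diagonally on Π ⊗ F, and let pr_{F→F'}: F → ℂH be the projection along ℂX ⊕ ℂY. Then for all u ∈ Π: (id ⊗ pr_{F→F'}) Ω̃(u ⊗ H) = 0, and (id ⊗ pr_{F→F'}) Ω̃²(u ⊗ H) = 16(λ² - 1) u ⊗ H - 16 H²u ⊗ H. -/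
open scoped TensorProduct

noncomputable section

/-- The adjoint representation of `sl(2,ℂ)` on itself, in the basis `(X, H, Y)`. -/
def adRep : SL2Rep (Fin 3 → ℂ) :=
  ⟨Matrix.toLin' !![(2:ℂ),0,0; 0,0,0; 0,0,-2],
   Matrix.toLin' !![(0:ℂ),-2,0; 0,0,1; 0,0,0],
   Matrix.toLin' !![(0:ℂ),0,0; -1,0,0; 0,2,0]⟩

/-- The element `H ∈ F = sl(2,ℂ)` in the basis `(X, H, Y)`. -/
def Hvec : Fin 3 → ℂ := Pi.single 1 1

/-- The projection `pr_{F→F'} : sl(2,ℂ) = ℂX ⊕ ℂH ⊕ ℂY → ℂH ≅ ℂ`. -/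
def prFF' : (Fin 3 → ℂ) →ₗ[ℂ] ℂ := LinearMap.proj 1


def e0 : Fin 3 → ℂ := Pi.single 0 1
def e2 : Fin 3 → ℂ := Pi.single 2 1

lemma adcas (w : Fin 3 → ℂ) :
    adRep.H (adRep.H w) = (8:ℂ) • w - (2:ℂ) • (adRep.X (adRep.Y w)) - (2:ℂ) • (adRep.Y (adRep.X w)) := by
  funext i; fin_cases i <;>
    simp [adRep, Matrix.toLin'_apply, Matrix.mulVec, dotProduct, Fin.sum_univ_succ] <;> ring

lemma tilde_apply {V : Type*} [AddCommGroup V] [Module ℂ V]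
    (ρ : SL2Rep V) (lam : ℂ)
    (hcas : ρ.casimir = (lam^2 - 1) • (1 : Module.End ℂ V))
    (v : V) (w : Fin 3 → ℂ) :
    ((ρ.tensor adRep).casimir - (lam^2 + 7) • (1 : Module.End ℂ (V ⊗[ℂ] (Fin 3 → ℂ)))) (v ⊗ₜ[ℂ] w)
      = (2:ℂ) • (ρ.H v ⊗ₜ[ℂ] adRep.H w) + (4:ℂ) • (ρ.X v ⊗ₜ[ℂ] adRep.Y w)
        + (4:ℂ) • (ρ.Y v ⊗ₜ[ℂ] adRep.X w) := by
  have hH : ∀ x : V, ρ.H (ρ.H x)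
      = (lam^2-1) • x - (2:ℂ) • (ρ.X (ρ.Y x)) - (2:ℂ) • (ρ.Y (ρ.X x)) := by
    intro x
    have h1 : ρ.H (ρ.H x) + (2:ℂ) • (ρ.X (ρ.Y x)) + (2:ℂ) • (ρ.Y (ρ.X x)) = (lam^2-1) • x := by
      have := congrFun (congrArg DFunLike.coe hcas) x
      simp only [SL2Rep.casimir, LinearMap.add_apply, LinearMap.smul_apply, LinearMap.comp_apply,
        Module.End.one_apply, smul_add] at this
      rw [← this]; module
    rw [← h1]; module
  simp only [SL2Rep.casimir, SL2Rep.tensor, LinearMap.sub_apply, LinearMap.add_apply,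
    LinearMap.smul_apply, LinearMap.comp_apply, Module.End.one_apply,
    TensorProduct.map_tmul, LinearMap.id_coe, id_eq, TensorProduct.tmul_add,
    TensorProduct.add_tmul, map_add, hH, adcas]
  simp only [TensorProduct.tmul_sub, TensorProduct.sub_tmul, TensorProduct.tmul_smul,
    ← TensorProduct.smul_tmul']
  module

lemma adH_Hvec : adRep.H Hvec = 0 := by
  funext i; fin_cases i <;>
    simp [adRep, Hvec, Matrix.toLin'_apply, Matrix.mulVec, dotProduct, Fin.sum_univ_succ]
lemma adX_Hvec : adRep.X Hvec = (-2:ℂ) • e0 := by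
  funext i; fin_cases i <;>
    simp [adRep, Hvec, e0, Matrix.toLin'_apply, Matrix.mulVec, dotProduct, Fin.sum_univ_succ]
lemma adY_Hvec : adRep.Y Hvec = (2:ℂ) • e2 := by
  funext i; fin_cases i <;>
    simp [adRep, Hvec, e2, Matrix.toLin'_apply, Matrix.mulVec, dotProduct, Fin.sum_univ_succ]
lemma adH_e2 : adRep.H e2 = (-2:ℂ) • e2 := by
  funext i; fin_cases i <;>
    simp [adRep, e2, Matrix.toLin'_apply, Matrix.mulVec, dotProduct, Fin.sum_univ_succ]
lemma adX_e2 : adRep.X e2 = Hvec := by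
  funext i; fin_cases i <;>
    simp [adRep, e2, Hvec, Matrix.toLin'_apply, Matrix.mulVec, dotProduct, Fin.sum_univ_succ]
lemma adY_e2 : adRep.Y e2 = 0 := by
  funext i; fin_cases i <;>
    simp [adRep, e2, Matrix.toLin'_apply, Matrix.mulVec, dotProduct, Fin.sum_univ_succ]
lemma adH_e0 : adRep.H e0 = (2:ℂ) • e0 := by
  funext i; fin_cases i <;>
    simp [adRep, e0, Matrix.toLin'_apply, Matrix.mulVec, dotProduct, Fin.sum_univ_succ]
lemma adX_e0 : adRep.X e0 = 0 := by
  funext i; fin_cases i <;>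
    simp [adRep, e0, Matrix.toLin'_apply, Matrix.mulVec, dotProduct, Fin.sum_univ_succ]
lemma adY_e0 : adRep.Y e0 = -Hvec := by
  funext i; fin_cases i <;>
    simp [adRep, e0, Hvec, Matrix.toLin'_apply, Matrix.mulVec, dotProduct, Fin.sum_univ_succ]
lemma pr_Hvec : prFF' Hvec = 1 := by simp [prFF', Hvec]
lemma pr_e0 : prFF' e0 = 0 := by simp [prFF', e0]
lemma pr_e2 : prFF' e2 = 0 := by simp [prFF', e2]

/-- With `Ω̃ = Ω - λ² - 7` acting diagonally on `Π ⊗ F`: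
`(id ⊗ pr)(Ω̃(u ⊗ H)) = 0` and `(id ⊗ pr)(Ω̃²(u ⊗ H)) = 16(λ²-1) u ⊗ H - 16 H²u ⊗ H`. -/
theorem tilde_casimir_on_uH {V : Type*} [AddCommGroup V] [Module ℂ V]
    (ρ : SL2Rep V) (hρ : ρ.IsSl2Rep) (lam : ℂ)
    (hcas : ρ.casimir = (lam^2 - 1) • (1 : Module.End ℂ V)) (u : V) :
    TensorProduct.map (LinearMap.id : V →ₗ[ℂ] V) prFF'
        (((ρ.tensor adRep).casimir - (lam^2 + 7) • (1 : Module.End ℂ (V ⊗[ℂ] (Fin 3 → ℂ)))) (u ⊗ₜ[ℂ] Hvec)) = 0 ∧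
    TensorProduct.map (LinearMap.id : V →ₗ[ℂ] V) prFF'
        (((ρ.tensor adRep).casimir - (lam^2 + 7) • (1 : Module.End ℂ (V ⊗[ℂ] (Fin 3 → ℂ))))
          ((((ρ.tensor adRep).casimir - (lam^2 + 7) • (1 : Module.End ℂ (V ⊗[ℂ] (Fin 3 → ℂ))))) (u ⊗ₜ[ℂ] Hvec)))
      = (16:ℂ) • ((lam^2 - 1) • (u ⊗ₜ[ℂ] (1:ℂ)))
        - (16:ℂ) • ((ρ.H (ρ.H u)) ⊗ₜ[ℂ] (1:ℂ)) := by
  have hstep : ((ρ.tensor adRep).casimir - (lam^2 + 7) • (1 : Module.End ℂ (V ⊗[ℂ] (Fin 3 → ℂ)))) (u ⊗ₜ[ℂ] Hvec)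
      = (8:ℂ) • (ρ.X u ⊗ₜ[ℂ] e2) - (8:ℂ) • (ρ.Y u ⊗ₜ[ℂ] e0) := by
    rw [tilde_apply ρ lam hcas u Hvec, adH_Hvec, adX_Hvec, adY_Hvec]
    simp only [TensorProduct.tmul_zero, TensorProduct.tmul_smul]
    module
  constructor
  · rw [hstep]
    simp [pr_e0, pr_e2, TensorProduct.smul_tmul']
  · rw [hstep, map_sub, map_smul, map_smul,
      tilde_apply ρ lam hcas (ρ.X u) e2, tilde_apply ρ lam hcas (ρ.Y u) e0,
      adH_e2, adX_e2, adY_e2, adH_e0, adX_e0, adY_e0]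
    have hH : ρ.H (ρ.H u)
        = (lam^2-1) • u - (2:ℂ) • (ρ.X (ρ.Y u)) - (2:ℂ) • (ρ.Y (ρ.X u)) := by
      have h1 : ρ.H (ρ.H u) + (2:ℂ) • (ρ.X (ρ.Y u)) + (2:ℂ) • (ρ.Y (ρ.X u)) = (lam^2-1) • u := by
        have := congrFun (congrArg DFunLike.coe hcas) u
        simp only [SL2Rep.casimir, LinearMap.add_apply, LinearMap.smul_apply, LinearMap.comp_apply,
          Module.End.one_apply, smul_add] at this
        rw [← this]; module
      rw [← h1]; module
    simp only [TensorProduct.tmul_zero, TensorProduct.tmul_smul, TensorProduct.tmul_neg,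
      smul_zero, map_add, map_sub, map_smul, map_neg, TensorProduct.map_tmul,
      LinearMap.id_coe, id_eq, pr_Hvec, pr_e0, pr_e2, hH]
    simp only [TensorProduct.tmul_zero, smul_zero, TensorProduct.sub_tmul,
      ← TensorProduct.smul_tmul']
    module
end
end
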